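/- Let n ≥ 1, let H and A be n×n Hermitian complex matrices, and define the Gibbs states ω = Matrix.exp H / Re (Matrix.trace (Matrix.exp H)) and ψ = Matrix.exp (H + A) / Re (Matrix.trace (Matrix.exp (H + A))). Then for every n×n positive definite Hermitian matrix ρ of trace 1: S(ρ‖ψ) = S(ρ‖ω) − Re (Matrix.trace (ρ * A)) + Real.log (Re (Matrix.trace (Matrix.exp (H + A))) / Re (Matrix.trace (Matrix.exp H))). (This is the finite-dimensional version of the perturbation identity (equation (9)/(rentid)) at the heart of the proof of the paper's Theorem 2, relating the relative entropies with respect to a reference Gibbs state and its perturbation by a bounded relative Hamiltonian A.) -/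

import Mathlib

open scoped ComplexOrder

/-- The matrix logarithm of a Hermitian complex matrix, defined through the continuous
functional calculus: apply `Real.log` to the eigenvalues in a spectral decomposition
(junk value `0` for non-Hermitian matrices). -/
noncomputable def matLog {n : ℕ} (M : Matrix (Fin n) (Fin n) ℂ) :
    Matrix (Fin n) (Fin n) ℂ :=
  if hM : M.IsHermitian then
    (hM.eigenvectorUnitary : Matrix (Fin n) (Fin n) ℂ) *
      Matrix.diagonal (fun i => (Real.log (hM.eigenvalues i) : ℂ)) *
      star (hM.eigenvectorUnitary : Matrix (Fin n) (Fin n) ℂ)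
  else 0

/-- The quantum relative entropy `S(ρ‖σ) = Re (Tr (ρ (log ρ − log σ)))` of two density
matrices. -/
noncomputable def relEnt {n : ℕ} (ρ σ : Matrix (Fin n) (Fin n) ℂ) : ℝ :=
  (Matrix.trace (ρ * (matLog ρ - matLog σ))).re

/-!
The CFC logarithm inverts the exponential of a Hermitian matrix and splits off positive scalars,
so the Gibbs state `Z⁻¹ • exp H` has logarithm `H - log Z`. Against a trace-one `ρ` this
gives `S(ρ‖Z⁻¹ • exp H) = Re Tr (ρ log ρ) - Re Tr (ρ H) + log Z`, and subtracting the
instances for `H + A` and `H` yields the identity.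
-/

-- The norm only makes `CFC.log` available; it induces the usual topology, so `exp` is unchanged.
open scoped Matrix.Norms.L2Operator MatrixOrder

namespace Matrix

variable {ι : Type*} [Fintype ι] [DecidableEq ι]

theorem IsHermitian.posDef_exp {M : Matrix ι ι ℂ} (hM : M.IsHermitian) :
    (NormedSpace.exp M).PosDef :=
  IsStrictlyPositive.posDef <| (isUnit_exp M).isStrictlyPositive hM.isSelfAdjoint.exp_nonneg

theorem IsHermitian.re_trace_exp_pos [Nonempty ι] {M : Matrix ι ι ℂ} (hM : M.IsHermitian) :
    0 < (NormedSpace.exp M).trace.re :=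
  (RCLike.pos_iff.mp hM.posDef_exp.trace_pos).1

end Matrix

theorem matLog_eq_log {n : ℕ} {M : Matrix (Fin n) (Fin n) ℂ} (hM : M.IsHermitian) :
    matLog M = CFC.log M := by
  rw [matLog, dif_pos hM, CFC.log, hM.cfc_eq, Matrix.IsHermitian.cfc]
  rfl

theorem matLog_smul_exp {n : ℕ} {M : Matrix (Fin n) (Fin n) ℂ} (hM : M.IsHermitian)
    {c : ℝ} (hc : 0 < c) :
    matLog (c • NormedSpace.exp M) = algebraMap ℝ _ (Real.log c) + M := by
  rw [matLog_eq_log (hM.posDef_exp.smul hc).isHermitian,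
    CFC.log_smul' _ hc hM.posDef_exp.isStrictlyPositive, CFC.log_exp M hM.isSelfAdjoint]

theorem relEnt_gibbs {n : ℕ} [NeZero n] {ρ H : Matrix (Fin n) (Fin n) ℂ} (hH : H.IsHermitian)
    (hρ : ρ.trace = 1) :
    relEnt ρ (((NormedSpace.exp H).trace.re)⁻¹ • NormedSpace.exp H) =
      (ρ * matLog ρ).trace.re - (ρ * H).trace.re + Real.log (NormedSpace.exp H).trace.re := by
  rw [relEnt, matLog_smul_exp hH (inv_pos.2 hH.re_trace_exp_pos),
    Algebra.algebraMap_eq_smul_one]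
  simp only [Matrix.mul_sub, Matrix.mul_add, Matrix.mul_smul, Matrix.trace_sub,
    Matrix.trace_add, Matrix.trace_smul, hρ, Complex.real_smul, mul_one, Complex.sub_re,
    Complex.add_re, Complex.ofReal_re, Real.log_inv]
  ring

theorem relEnt_perturbation_general {n : ℕ} (hn : 1 ≤ n)
    (H A : Matrix (Fin n) (Fin n) ℂ) (hH : H.IsHermitian) (hA : A.IsHermitian)
    (ω ψ : Matrix (Fin n) (Fin n) ℂ)
    (hω : ω = ((Matrix.trace (NormedSpace.exp H)).re)⁻¹ • NormedSpace.exp H)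
    (hψ : ψ = ((Matrix.trace (NormedSpace.exp (H + A))).re)⁻¹ •
      NormedSpace.exp (H + A))
    (ρ : Matrix (Fin n) (Fin n) ℂ) (hρtr : Matrix.trace ρ = 1) :
    relEnt ρ ψ = relEnt ρ ω - (Matrix.trace (ρ * A)).re +
      Real.log ((Matrix.trace (NormedSpace.exp (H + A))).re
        / (Matrix.trace (NormedSpace.exp H)).re) := by
  have : NeZero n := ⟨by omega⟩
  subst hω hψ
  rw [relEnt_gibbs hH hρtr, relEnt_gibbs (hH.add hA) hρtr,
    Real.log_div (hH.add hA).re_trace_exp_pos.ne' hH.re_trace_exp_pos.ne', Matrix.mul_add,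
    Matrix.trace_add, Complex.add_re]
  ring

/-- **Perturbation identity for the relative entropy** (finite-dimensional version of
equation (9)/(rentid) in the proof of Theorem 2): for Hermitian `H`, `A`, the Gibbs
states `ω = exp H / Re (Tr (exp H))` and `ψ = exp (H+A) / Re (Tr (exp (H+A)))`, and any
positive definite density matrix `ρ`,
`S(ρ‖ψ) = S(ρ‖ω) − Re (Tr (ρ A)) + log (Re (Tr (exp (H+A))) / Re (Tr (exp H)))`. -/
theorem relEnt_perturbation {n : ℕ} (hn : 1 ≤ n)
    (H A : Matrix (Fin n) (Fin n) ℂ) (hH : H.IsHermitian) (hA : A.IsHermitian)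
    (ω ψ : Matrix (Fin n) (Fin n) ℂ)
    (hω : ω = ((Matrix.trace (NormedSpace.exp H)).re)⁻¹ • NormedSpace.exp H)
    (hψ : ψ = ((Matrix.trace (NormedSpace.exp (H + A))).re)⁻¹ •
      NormedSpace.exp (H + A))
    (ρ : Matrix (Fin n) (Fin n) ℂ) (hρ : ρ.PosDef) (hρtr : Matrix.trace ρ = 1) :
    relEnt ρ ψ = relEnt ρ ω - (Matrix.trace (ρ * A)).re +
      Real.log ((Matrix.trace (NormedSpace.exp (H + A))).re
        / (Matrix.trace (NormedSpace.exp H)).re) :=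
  relEnt_perturbation_general hn H A hH hA ω ψ hω hψ ρ hρtr
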